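/- If F(x) is a Gaussian random variable with mean f̂(x) and standard deviation σ̂(x) > 0, and f_min is a real constant, then E[max(f_min − F(x), 0)] = σ̂(x)·(u·Φ(u) + φ(u)), where u = (f_min − f̂(x))/σ̂(x), Φ is the standard normal CDF and φ its density. -/

import Mathlib

open MeasureTheory Real

/-- Density of the standard normal distribution. -/
noncomputable def stdNormalPDF (t : ℝ) : ℝ :=
  (Real.sqrt (2 * Real.pi))⁻¹ * Real.exp (-t ^ 2 / 2)

/-- Cumulative distribution function of the standard normal distribution. -/
noncomputable def stdNormalCDF (u : ℝ) : ℝ :=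
  ∫ t in Set.Iic u, stdNormalPDF t

open Filter Set

lemma stdNormalPDF_eq (t : ℝ) :
    stdNormalPDF t = ProbabilityTheory.gaussianPDFReal 0 1 t := by
  simp [stdNormalPDF, ProbabilityTheory.gaussianPDFReal, neg_div]

lemma integrable_stdNormalPDF : Integrable stdNormalPDF := by
  have := ProbabilityTheory.integrable_gaussianPDFReal 0 1
  exact this.congr (by filter_upwards with t using (stdNormalPDF_eq t).symm)

lemma integrable_mul_stdNormalPDF : Integrable (fun t => t * stdNormalPDF t) := by
  have h : Integrable (fun t : ℝ => t * Real.exp (-(1/2 : ℝ) * t ^ 2)) :=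
    integrable_mul_exp_neg_mul_sq (by norm_num)
  have := h.const_mul (Real.sqrt (2 * Real.pi))⁻¹
  refine this.congr (by filter_upwards with t; simp [stdNormalPDF]; ring_nf)

lemma hasDerivAt_negPDF (t : ℝ) :
    HasDerivAt (fun s => -stdNormalPDF s) (t * stdNormalPDF t) t := by
  have h1 : HasDerivAt (fun s : ℝ => -s ^ 2 / 2) (-t) t := by
    have := ((hasDerivAt_pow 2 t).neg).div_const 2
    simpa using this.congr_deriv (by ring)
  have h2 := (h1.exp).const_mul (Real.sqrt (2 * Real.pi))⁻¹
  exact (h2.neg).congr_deriv (by simp [stdNormalPDF]; ring)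

lemma tendsto_negPDF : Tendsto (fun s => -stdNormalPDF s) atBot (nhds 0) := by
  have h1 : Tendsto (fun s : ℝ => -s ^ 2 / 2) atBot atBot := by
    apply Tendsto.atBot_div_const (by norm_num)
    apply tendsto_neg_atTop_atBot.comp
    have : Tendsto (fun s : ℝ => s ^ 2) atBot atTop := by
      have := (tendsto_pow_atTop (two_ne_zero)).comp tendsto_neg_atBot_atTop (α := ℝ)
      simpa [Function.comp_def, neg_sq] using this
    exact this
  have := (Real.tendsto_exp_atBot.comp h1).const_mul (Real.sqrt (2 * Real.pi))⁻¹
  simpa [stdNormalPDF, Function.comp] using this.neg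

lemma integral_Iic_mul_pdf (u : ℝ) :
    ∫ t in Set.Iic u, t * stdNormalPDF t = -stdNormalPDF u := by
  have := integral_Iic_of_hasDerivAt_of_tendsto' (a := u)
    (f := fun s => -stdNormalPDF s) (f' := fun t => t * stdNormalPDF t)
    (fun x _ => hasDerivAt_negPDF x) (integrable_mul_stdNormalPDF.integrableOn) tendsto_negPDF
  simpa using this

lemma key (u : ℝ) :
    ∫ t, max (u - t) 0 * stdNormalPDF t = u * stdNormalCDF u + stdNormalPDF u := by
  have h1 : ∫ t, max (u - t) 0 * stdNormalPDF t
      = ∫ t in Set.Iic u, (u - t) * stdNormalPDF t := by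
    rw [← integral_indicator measurableSet_Iic]
    congr 1
    funext t
    by_cases ht : t ≤ u
    · simp [Set.indicator_apply, ht, max_eq_left (by linarith : (0:ℝ) ≤ u - t)]
    · simp [Set.indicator_apply, ht, max_eq_right (by linarith : u - t ≤ (0:ℝ))]
  rw [h1]
  have h2 : ∀ t : ℝ, (u - t) * stdNormalPDF t
      = u * stdNormalPDF t - t * stdNormalPDF t := fun t => by ring
  simp_rw [h2]
  rw [integral_sub ((integrable_stdNormalPDF.const_mul u).integrableOn)
    (integrable_mul_stdNormalPDF.integrableOn), integral_Iic_mul_pdf,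
    integral_const_mul]
  rw [stdNormalCDF]
  ring


/-- Closed-form expression of the expected improvement criterion. -/
theorem stmt1 (fhat σ fmin : ℝ) (hσ : 0 < σ) :
    ∫ y, max (fmin - y) 0 ∂(ProbabilityTheory.gaussianReal fhat (Real.toNNReal (σ ^ 2))) =
      σ * ((fmin - fhat) / σ * stdNormalCDF ((fmin - fhat) / σ)
        + stdNormalPDF ((fmin - fhat) / σ)) := by
  set u := (fmin - fhat) / σ with hu
  have hmap : (ProbabilityTheory.gaussianReal 0 1).map (fun t => σ * t + fhat)
      = ProbabilityTheory.gaussianReal fhat (Real.toNNReal (σ ^ 2)) := by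
    have h1 := ProbabilityTheory.gaussianReal_map_const_mul (μ := 0) (v := 1) σ
    have hcomp : (fun t : ℝ => σ * t + fhat) = (· + fhat) ∘ (σ * ·) := rfl
    rw [hcomp, ← Measure.map_map (measurable_add_const fhat) (measurable_const_mul σ),
      h1, ProbabilityTheory.gaussianReal_map_add_const fhat]
    congr 1
    · ring
    · ext : 1
      simp [Real.coe_toNNReal _ (sq_nonneg σ)]
  rw [← hmap, integral_map (by fun_prop)
    (Continuous.aestronglyMeasurable (by continuity))]
  rw [ProbabilityTheory.gaussianReal_of_var_ne_zero _ one_ne_zero]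
  have hpdf : ProbabilityTheory.gaussianPDF 0 1
      = fun x => ((ProbabilityTheory.gaussianPDFReal 0 1 x).toNNReal : ENNReal) := by
    funext x
    rw [ProbabilityTheory.gaussianPDF, ENNReal.ofReal]
  rw [hpdf, integral_withDensity_eq_integral_smul
    ((ProbabilityTheory.measurable_gaussianPDFReal 0 1).real_toNNReal)]
  have hint : ∀ t : ℝ, (ProbabilityTheory.gaussianPDFReal 0 1 t).toNNReal
        • max (fmin - (σ * t + fhat)) 0
      = (σ * max (u - t) 0) * stdNormalPDF t := by
    intro t
    rw [NNReal.smul_def, smul_eq_mul,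
      Real.coe_toNNReal _ (ProbabilityTheory.gaussianPDFReal_nonneg 0 1 t),
      ← stdNormalPDF_eq]
    have : fmin - (σ * t + fhat) = σ * (u - t) := by
      field_simp [hu]
      rw [hu, mul_sub, mul_div_assoc', mul_div_cancel_left₀ _ hσ.ne']; ring
    rw [this, show σ * (u - t) ⊔ 0 = σ * ((u - t) ⊔ 0) from by
      rw [mul_max_of_nonneg _ _ hσ.le, mul_zero]]
    ring
  simp_rw [hint, mul_assoc]
  rw [integral_const_mul, key]
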